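/- If L is continuous (in addition to being nonnegative, convex in u, coercive, and locally bounded), then L⁺ = L, where L⁺(x,u) = limsup_{h→0+} (1/h) inf{ ∫_{−h}^{0} L(y(s),y'(s)) ds : y(−h)=x−hu, y(0)=x }. -/

import Mathlib

/-!
The straight arc `s ↦ x + s • u` shows `L⁺ ≤ L`: its cost divided by `h` is an average of the
continuous function `s ↦ L (x + s • u) u` over `[-h, 0]`, which tends to `L x u`.

For `L⁺ ≥ L`, fix `a < L x u`. Convexity gives an affine minorant `a + φ (w - u)` of `L x` with
room to spare; by continuity on bounded velocities and superlinearity on large ones it remains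
below `L z` for all `z` near `x`. Superlinearity also bounds the length `∫ ‖y'‖` of an arc by
`h R + ∫ L (y, y')`, so an arc costing less than `h a` stays near `x` when `h` is small; but then
integrating the minorant along it gives cost at least `h a`, because `∫ (y' - u) = 0`.
-/

open MeasureTheory Set Filter
open scoped ENNReal Topology

def Superlinear {n : ℕ} (Θ : EuclideanSpace ℝ (Fin n) → ℝ) : Prop :=
  ∀ M : ℝ, ∃ R : ℝ, ∀ u : EuclideanSpace ℝ (Fin n), R ≤ ‖u‖ → M * ‖u‖ ≤ Θ u

def LocallyBounded {n : ℕ}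
    (L : EuclideanSpace ℝ (Fin n) → EuclideanSpace ℝ (Fin n) → ℝ) : Prop :=
  ∀ x₀ : EuclideanSpace ℝ (Fin n), ∃ M r : ℝ, 0 < r ∧
    ∀ x u, ‖x - x₀‖ ≤ r → ‖u‖ ≤ r → L x u ≤ M

/-- Infimum of `∫_{-h}^0 L(y,y')` over absolutely continuous arcs `y` on `[-h,0]`
with `y(-h) = x - h•u` and `y(0) = x`. -/
noncomputable def arcInf {n : ℕ}
    (L : EuclideanSpace ℝ (Fin n) → EuclideanSpace ℝ (Fin n) → ℝ)
    (x u : EuclideanSpace ℝ (Fin n)) (h : ℝ) : ℝ≥0∞ :=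
  ⨅ (y : ℝ → EuclideanSpace ℝ (Fin n)) (y' : ℝ → EuclideanSpace ℝ (Fin n))
    (_ : IntervalIntegrable y' volume (-h) 0)
    (_ : ∀ s ∈ Set.Icc (-h) (0:ℝ), y s = (x - h • u) + ∫ τ in (-h)..s, y' τ)
    (_ : y 0 = x)
    (_ : IntervalIntegrable (fun s => L (y s) (y' s)) volume (-h) 0),
    ENNReal.ofReal (∫ s in (-h)..(0:ℝ), L (y s) (y' s))

/-- `L⁺(x,u) = limsup_{h→0+} (1/h) inf{∫_{-h}^0 L(y,y') : y(-h)=x-hu, y(0)=x}`. -/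
noncomputable def LPlus {n : ℕ}
    (L : EuclideanSpace ℝ (Fin n) → EuclideanSpace ℝ (Fin n) → ℝ)
    (x u : EuclideanSpace ℝ (Fin n)) : ℝ≥0∞ :=
  limsup (fun h : ℝ => arcInf L x u h / ENNReal.ofReal h) (𝓝[>] (0:ℝ))

theorem ConvexOn.exists_clm_add_le_of_lt {E : Type*} [NormedAddCommGroup E] [NormedSpace ℝ E]
    {f : E → ℝ} (hf : ConvexOn ℝ univ f) (hfc : Continuous f) {u : E} {a : ℝ} (ha : a < f u) :
    ∃ φ : E →L[ℝ] ℝ, ∀ w, a + φ (w - u) ≤ f w := by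
  obtain ⟨φ, c, hle, hu⟩ := hf.exists_affine_le_of_lt (𝕜 := ℝ) (mem_univ u) ha isClosed_univ
    (hfc.lowerSemicontinuous.lowerSemicontinuousOn _)
  refine ⟨φ, fun w => ?_⟩
  have := hle ⟨w, mem_univ w⟩
  simp only [Pi.add_apply, Function.comp_apply, RCLike.re_to_real, Function.const_apply,
    Set.domRestrict_apply] at this hu
  rw [map_sub, ← hu]
  linarith

theorem Superlinear.exists_norm_le_add {n : ℕ} {Θ : EuclideanSpace ℝ (Fin n) → ℝ}
    (hΘ : Superlinear Θ) (hΘ0 : ∀ u, 0 ≤ Θ u) : ∃ R, ∀ u, ‖u‖ ≤ R + Θ u := by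
  obtain ⟨R, hR⟩ := hΘ 1
  refine ⟨max R 0, fun u => ?_⟩
  rcases le_or_gt R ‖u‖ with hu | hu
  · linarith [hR u hu, le_max_right R 0]
  · linarith [hΘ0 u, le_max_left R 0]

theorem tendsto_inv_mul_integral_neg_zero {g : ℝ → ℝ} (hg : Continuous g) :
    Tendsto (fun h => h⁻¹ * ∫ s in -h..0, g s) (𝓝[>] 0) (𝓝 (g 0)) := by
  have hslope := (hg.integral_hasStrictDerivAt 0 0).hasDerivAt.tendsto_slope_zero_left
  have hneg : Tendsto (fun h : ℝ => -h) (𝓝[>] 0) (𝓝[<] 0) := by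
    simpa using (tendsto_neg_nhdsGT_neg (a := (0:ℝ)))
  refine (hslope.comp hneg).congr fun h => ?_
  simp [intervalIntegral.integral_symm (-h) 0]

section Arc

variable {E : Type*} [NormedAddCommGroup E] [NormedSpace ℝ E] {y y' : ℝ → E}

theorem norm_sub_le_integral_norm_of_eq_add_integral {a b : ℝ} {c : E} (hab : a ≤ b)
    (hy' : IntervalIntegrable y' volume a b) (hy : ∀ s ∈ Icc a b, y s = c + ∫ τ in a..s, y' τ)
    {s : ℝ} (hs : s ∈ Icc a b) : ‖y b - y s‖ ≤ ∫ τ in a..b, ‖y' τ‖ := by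
  have hsub : uIcc a s ⊆ uIcc a b := uIcc_subset_uIcc_left (by rwa [uIcc_of_le hab])
  rw [hy b (right_mem_Icc.2 hab), hy s hs, add_sub_add_left_eq_sub,
    intervalIntegral.integral_interval_sub_left hy' (hy'.mono_set hsub)]
  calc ‖∫ τ in s..b, y' τ‖ ≤ ∫ τ in s..b, ‖y' τ‖ :=
        intervalIntegral.norm_integral_le_integral_norm hs.2
    _ ≤ ∫ τ in a..b, ‖y' τ‖ :=
        intervalIntegral.integral_mono_interval hs.1 hs.2 le_rfl
          (Eventually.of_forall fun _ => norm_nonneg _) hy'.norm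

theorem mul_le_integral_of_affine_minorant [CompleteSpace E] {L : E → E → ℝ} {x u : E} {h a R δ : ℝ}
    {φ : E →L[ℝ] ℝ} (hφ : ∀ z w, dist z x < δ → a + φ (w - u) ≤ L z w)
    (hR : ∀ z w, ‖w‖ ≤ R + L z w) (hh : 0 ≤ h) (hhδ : h * (R + a) ≤ δ)
    (hy' : IntervalIntegrable y' volume (-h) 0)
    (hy : ∀ s ∈ Icc (-h) (0:ℝ), y s = (x - h • u) + ∫ τ in (-h)..s, y' τ) (hy0 : y 0 = x)
    (hLy : IntervalIntegrable (fun s => L (y s) (y' s)) volume (-h) 0) :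
    h * a ≤ ∫ s in (-h)..0, L (y s) (y' s) := by
  have hh' : -h ≤ 0 := by linarith
  by_contra! hlt
  have hlength : ∫ s in (-h)..0, ‖y' s‖ < δ :=
    calc ∫ s in (-h)..0, ‖y' s‖ ≤ ∫ s in (-h)..0, (R + L (y s) (y' s)) :=
          intervalIntegral.integral_mono_on hh' hy'.norm (intervalIntegrable_const.add hLy)
            fun s _ => hR _ _
      _ = h * R + ∫ s in (-h)..0, L (y s) (y' s) := by
          simp [intervalIntegral.integral_add intervalIntegrable_const hLy]
      _ < δ := by linarith
  have hnear : ∀ s ∈ Icc (-h) (0:ℝ), dist (y s) x < δ := fun s hs => by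
    rw [dist_comm, dist_eq_norm, ← hy0]
    exact (norm_sub_le_integral_norm_of_eq_add_integral hh' hy' hy hs).trans_lt hlength
  have hdisp : ∫ s in (-h)..0, (y' s - u) = 0 := by
    have hend := hy 0 (right_mem_Icc.2 hh')
    rw [hy0] at hend
    rw [intervalIntegral.integral_sub hy' intervalIntegrable_const, intervalIntegral.integral_const,
      sub_neg_eq_add, zero_add]
    linear_combination (norm := module) -hend
  have hdisp_int : IntervalIntegrable (fun s => y' s - u) volume (-h) 0 :=
    hy'.sub intervalIntegrable_const
  have hφint : IntervalIntegrable (fun s => φ (y' s - u)) volume (-h) 0 :=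
    ⟨φ.integrable_comp hdisp_int.1, φ.integrable_comp hdisp_int.2⟩
  have hmin : ∫ s in (-h)..0, (a + φ (y' s - u)) ≤ ∫ s in (-h)..0, L (y s) (y' s) :=
    intervalIntegral.integral_mono_on hh' (intervalIntegrable_const.add hφint) hLy
      fun s hs => hφ _ _ (hnear s hs)
  rw [intervalIntegral.integral_add intervalIntegrable_const hφint,
    φ.intervalIntegral_comp_comm hdisp_int, hdisp] at hmin
  simp only [intervalIntegral.integral_const, sub_neg_eq_add, zero_add, smul_eq_mul, map_zero,
    add_zero] at hmin
  exact hlt.not_ge hmin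

end Arc

section Lagrangian

variable {n : ℕ} {L : EuclideanSpace ℝ (Fin n) → EuclideanSpace ℝ (Fin n) → ℝ}
  {x u : EuclideanSpace ℝ (Fin n)}

theorem arcInf_le_integral_segment {h : ℝ}
    (hint : IntervalIntegrable (fun s => L (x + s • u) u) volume (-h) 0) :
    arcInf L x u h ≤ ENNReal.ofReal (∫ s in (-h)..0, L (x + s • u) u) := by
  refine iInf₂_le_of_le (fun s => x + s • u) (fun _ => u) ?_
  refine iInf_le_of_le intervalIntegrable_const (iInf_le_of_le (fun s _ => ?_) ?_)
  · rw [intervalIntegral.integral_const]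
    module
  · exact iInf_le_of_le (by simp) (iInf_le _ hint)

theorem ofReal_le_arcInf {h c : ℝ}
    (H : ∀ y y' : ℝ → EuclideanSpace ℝ (Fin n), IntervalIntegrable y' volume (-h) 0 →
      (∀ s ∈ Icc (-h) (0:ℝ), y s = (x - h • u) + ∫ τ in (-h)..s, y' τ) → y 0 = x →
      IntervalIntegrable (fun s => L (y s) (y' s)) volume (-h) 0 →
      c ≤ ∫ s in (-h)..0, L (y s) (y' s)) :
    ENNReal.ofReal c ≤ arcInf L x u h :=
  le_iInf₂ fun y y' => le_iInf fun hy' => le_iInf fun hy => le_iInf fun hy0 => le_iInf fun hLy =>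
    ENNReal.ofReal_le_ofReal (H y y' hy' hy hy0 hLy)

theorem LPlus_le_of_continuous (hcont : Continuous fun s : ℝ => L (x + s • u) u) :
    LPlus L x u ≤ ENNReal.ofReal (L x u) := by
  have hlim := tendsto_inv_mul_integral_neg_zero hcont
  rw [zero_smul, add_zero] at hlim
  calc LPlus L x u
      ≤ limsup (fun h => ENNReal.ofReal (h⁻¹ * ∫ s in (-h)..0, L (x + s • u) u)) (𝓝[>] 0) := by
        refine limsup_le_limsup ?_
        filter_upwards [self_mem_nhdsWithin] with h (hh : 0 < h)
        rw [inv_mul_eq_div, ENNReal.ofReal_div_of_pos hh]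
        exact ENNReal.div_le_div_right
          (arcInf_le_integral_segment (hcont.intervalIntegrable _ _)) _
    _ = ENNReal.ofReal (L x u) := (ENNReal.tendsto_ofReal hlim).limsup_eq

theorem exists_clm_eventually_add_le
    (hLcont : Continuous fun p : EuclideanSpace ℝ (Fin n) × EuclideanSpace ℝ (Fin n) => L p.1 p.2)
    (hLconv : ∀ x, ConvexOn ℝ univ (L x)) {Θ : EuclideanSpace ℝ (Fin n) → ℝ}
    (hΘsuper : Superlinear Θ) (hcoerc : ∀ x u, Θ u ≤ L x u) {a : ℝ} (ha : a < L x u) :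
    ∃ φ : EuclideanSpace ℝ (Fin n) →L[ℝ] ℝ, ∀ᶠ z in 𝓝 x, ∀ w, a + φ (w - u) ≤ L z w := by
  obtain ⟨b, hab, hb⟩ := exists_between ha
  obtain ⟨φ, hφ⟩ := (hLconv x).exists_clm_add_le_of_lt (hLcont.comp (.prodMk_right x)) hb
  refine ⟨φ, ?_⟩
  obtain ⟨R, hR⟩ := hΘsuper (|a| + ‖φ‖ * (1 + ‖u‖))
  have hfar : ∀ z w, max R 1 ≤ ‖w‖ → a + φ (w - u) ≤ L z w := fun z w hw => by
    have hw1 : 1 ≤ ‖w‖ := (le_max_right _ _).trans hw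
    have hφw : φ (w - u) ≤ ‖φ‖ * (‖w‖ + ‖u‖) :=
      (le_abs_self _).trans <| (φ.le_opNorm _).trans <|
        mul_le_mul_of_nonneg_left (norm_sub_le _ _) (norm_nonneg _)
    have hsuper := hR w ((le_max_left _ _).trans hw)
    nlinarith [le_abs_self a, abs_nonneg a, norm_nonneg φ, norm_nonneg u, hcoerc z w,
      mul_le_mul_of_nonneg_left hw1 (mul_nonneg (norm_nonneg φ) (norm_nonneg u))]
  have hnear : ∀ᶠ z in 𝓝 x, ∀ w ∈ Metric.closedBall 0 (max R 1), a + φ (w - u) ≤ L z w := by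
    refine (isCompact_closedBall 0 _).eventually_forall_of_forall_eventually fun w _ => ?_
    have hcont : Continuous fun p : EuclideanSpace ℝ (Fin n) × EuclideanSpace ℝ (Fin n) =>
        L p.1 p.2 - φ (p.2 - u) := by fun_prop
    have hval : a < L x w - φ (w - u) := by linarith [hφ w]
    filter_upwards [hcont.continuousAt.eventually (lt_mem_nhds hval)] with p hp
    linarith
  filter_upwards [hnear] with z hz w
  rcases le_or_gt ‖w‖ (max R 1) with hw | hw
  · exact hz w (mem_closedBall_zero_iff.2 hw)
  · exact hfar z w hw.le

theorem ofReal_le_LPlus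
    (hLcont : Continuous fun p : EuclideanSpace ℝ (Fin n) × EuclideanSpace ℝ (Fin n) => L p.1 p.2)
    (hLconv : ∀ x, ConvexOn ℝ univ (L x)) {Θ : EuclideanSpace ℝ (Fin n) → ℝ}
    (hΘ0 : ∀ u, 0 ≤ Θ u) (hΘsuper : Superlinear Θ) (hcoerc : ∀ x u, Θ u ≤ L x u) {a : ℝ}
    (ha : a < L x u) : ENNReal.ofReal a ≤ LPlus L x u := by
  obtain ⟨φ, hφ⟩ := exists_clm_eventually_add_le hLcont hLconv hΘsuper hcoerc ha
  obtain ⟨δ, hδ, hφδ⟩ := Metric.eventually_nhds_iff.1 hφ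
  obtain ⟨R, hR⟩ := hΘsuper.exists_norm_le_add hΘ0
  have hsmall : ∀ᶠ h in 𝓝[>] (0:ℝ), h * (R + a) < δ := by
    refine nhdsWithin_le_nhds (Continuous.continuousAt ?_ |>.eventually (gt_mem_nhds ?_))
    · fun_prop
    · simpa using hδ
  refine le_limsup_of_frequently_le (Eventually.frequently ?_) (by isBoundedDefault)
  filter_upwards [hsmall, self_mem_nhdsWithin] with h hhδ (hh : 0 < h)
  rw [ENNReal.le_div_iff_mul_le (.inl (by simpa using hh)) (.inl ENNReal.ofReal_ne_top),
    ← ENNReal.ofReal_mul' hh.le, mul_comm]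
  exact ofReal_le_arcInf fun y y' hy' hy hy0 hLy =>
    mul_le_integral_of_affine_minorant (fun z w hz => hφδ hz w)
      (fun z w => (hR w).trans (by linarith [hcoerc z w])) hh.le hhδ.le hy' hy hy0 hLy

end Lagrangian

theorem stmt_14_general {n : ℕ}
    (L : EuclideanSpace ℝ (Fin n) → EuclideanSpace ℝ (Fin n) → ℝ)
    (hLcont : Continuous
      (fun p : EuclideanSpace ℝ (Fin n) × EuclideanSpace ℝ (Fin n) => L p.1 p.2))
    (hLconv : ∀ x, ConvexOn ℝ Set.univ (L x))
    (Θ : EuclideanSpace ℝ (Fin n) → ℝ) (hΘ0 : ∀ u, 0 ≤ Θ u)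
    (hΘsuper : Superlinear Θ)
    (hcoerc : ∀ x u, Θ u ≤ L x u) :
    ∀ x u : EuclideanSpace ℝ (Fin n), LPlus L x u = ENNReal.ofReal (L x u) := by
  intro x u
  have hline : Continuous fun s : ℝ => L (x + s • u) u :=
    hLcont.comp (by fun_prop : Continuous fun s : ℝ => (x + s • u, u))
  refine le_antisymm (LPlus_le_of_continuous hline) ?_
  refine le_of_forall_lt_imp_le_of_dense fun c hc => ?_
  rw [← ENNReal.ofReal_toReal (ne_top_of_lt hc)]
  exact ofReal_le_LPlus hLcont hLconv hΘ0 hΘsuper hcoerc (ENNReal.toReal_lt_of_lt_ofReal hc)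

theorem stmt_14 {n : ℕ}
    (L : EuclideanSpace ℝ (Fin n) → EuclideanSpace ℝ (Fin n) → ℝ)
    (hL0 : ∀ x u, 0 ≤ L x u)
    (hLcont : Continuous
      (fun p : EuclideanSpace ℝ (Fin n) × EuclideanSpace ℝ (Fin n) => L p.1 p.2))
    (hLconv : ∀ x, ConvexOn ℝ Set.univ (L x))
    (Θ : EuclideanSpace ℝ (Fin n) → ℝ) (hΘ0 : ∀ u, 0 ≤ Θ u)
    (hΘconv : ConvexOn ℝ Set.univ Θ) (hΘsuper : Superlinear Θ)
    (hcoerc : ∀ x u, Θ u ≤ L x u)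
    (hLbd : LocallyBounded L) :
    ∀ x u : EuclideanSpace ℝ (Fin n), LPlus L x u = ENNReal.ofReal (L x u) :=
  stmt_14_general L hLcont hLconv Θ hΘ0 hΘsuper hcoerc
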